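/- arXiv:1906.04693 — 3 statements merged into one kernel-verified Lean document; each statement's English description precedes it below -/
import Mathlib

section
/- Let t₁, t₂, t₃ ∈ ℝ and let ρ_T := ρ(0, 0, diag(t₁,t₂,t₃)) be the Bloch-form T-state (both local Bloch vectors zero, diagonal correlation matrix). Let u, v ∈ ℝ and let (A_k)_{k ∈ F} be a finite family of 2×2 complex matrices satisfying Σ_k A_k† A_k = I, Σ_k A_k A_k† = I + (sin u)(sin v) σ₃, Σ_k A_k σ₁ A_k† = (cos u) σ₁, Σ_k A_k σ₂ A_k† = (cos v) σ₂, and Σ_k A_k σ₃ A_k† = (cos u)(cos v) σ₃ (Kraus operators of the extremal qubit map Φ^E_{u,v}). Then Σ_k (A_k ⊗ I) ρ_T (A_k† ⊗ I) = ρ(a', 0, T') where a' = (0, 0, sin u sin v) and T' = diag(t₁ cos u, t₂ cos v, t₃ cos u cos v): the image is a displaced T-state with Alice's Bloch vector of length |sin u sin v| along the z-axis. -/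
open Matrix

noncomputable section

/-- Kronecker product of square complex matrices: `(A ⊗ B)((i,j),(k,l)) = A i k * B j l`. -/
def kron {n m : ℕ} (A : Matrix (Fin n) (Fin n) ℂ) (B : Matrix (Fin m) (Fin m) ℂ) :
    Matrix (Fin n × Fin m) (Fin n × Fin m) ℂ :=
  Matrix.of fun p q => A p.1 q.1 * B p.2 q.2

/-- The Pauli matrices `σ₁, σ₂, σ₃`. -/
def pauli : Fin 3 → Matrix (Fin 2) (Fin 2) ℂ :=
  ![!![0, 1; 1, 0], !![0, -Complex.I; Complex.I, 0], !![1, 0; 0, -1]]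

/-- The Bloch-form two-qubit operator
`ρ(a,b,T) = (1/4)(I⊗I + ∑ᵢ aᵢ σᵢ⊗I + ∑ⱼ bⱼ I⊗σⱼ + ∑ᵢⱼ Tᵢⱼ σᵢ⊗σⱼ)`. -/
def blochState (a b : Fin 3 → ℝ) (T : Matrix (Fin 3) (Fin 3) ℝ) :
    Matrix (Fin 2 × Fin 2) (Fin 2 × Fin 2) ℂ :=
  (4 : ℂ)⁻¹ • (kron 1 1 + (∑ i, (a i : ℂ) • kron (pauli i) 1)
    + (∑ j, (b j : ℂ) • kron 1 (pauli j))
    + ∑ i, ∑ j, (T i j : ℂ) • kron (pauli i) (pauli j))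

lemma kron_mul {n m : ℕ} (A C : Matrix (Fin n) (Fin n) ℂ) (B D : Matrix (Fin m) (Fin m) ℂ) :
    kron A B * kron C D = kron (A * C) (B * D) := by
  ext ⟨i,j⟩ ⟨k,l⟩
  simp only [kron, of_apply, mul_apply, Fintype.sum_prod_type]
  rw [Finset.sum_mul_sum]
  refine Finset.sum_congr rfl fun p _ => Finset.sum_congr rfl fun q _ => by ring

lemma kron_smul_left {n m : ℕ} (c : ℂ) (A : Matrix (Fin n) (Fin n) ℂ)
    (B : Matrix (Fin m) (Fin m) ℂ) : kron (c • A) B = c • kron A B := by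
  ext ⟨i,j⟩ ⟨k,l⟩; simp [kron, mul_assoc]

lemma kron_add_left {n m : ℕ} (A C : Matrix (Fin n) (Fin n) ℂ)
    (B : Matrix (Fin m) (Fin m) ℂ) : kron (A + C) B = kron A B + kron C B := by
  ext ⟨i,j⟩ ⟨k,l⟩; simp [kron, add_mul]

lemma kron_sum_left {n m : ℕ} {F : Type} [Fintype F] (f : F → Matrix (Fin n) (Fin n) ℂ)
    (B : Matrix (Fin m) (Fin m) ℂ) : kron (∑ k, f k) B = ∑ k, kron (f k) B := by
  ext ⟨i,j⟩ ⟨k,l⟩; simp [kron, Finset.sum_mul, Matrix.sum_apply]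

lemma blochState_T (t₁ t₂ t₃ : ℝ) : blochState 0 0 (Matrix.diagonal ![t₁, t₂, t₃]) =
    (4:ℂ)⁻¹ • (kron 1 1 + (t₁:ℂ) • kron (pauli 0) (pauli 0)
      + (t₂:ℂ) • kron (pauli 1) (pauli 1) + (t₃:ℂ) • kron (pauli 2) (pauli 2)) := by
  simp [blochState, Fin.sum_univ_three, Matrix.diagonal_apply]
  module

lemma blochState_disp (s c₁ c₂ c₃ : ℝ) :
    blochState ![0, 0, s] 0 (Matrix.diagonal ![c₁, c₂, c₃]) =
    (4:ℂ)⁻¹ • (kron 1 1 + (s:ℂ) • kron (pauli 2) 1 + (c₁:ℂ) • kron (pauli 0) (pauli 0)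
      + (c₂:ℂ) • kron (pauli 1) (pauli 1) + (c₃:ℂ) • kron (pauli 2) (pauli 2)) := by
  simp [blochState, Fin.sum_univ_three, Matrix.diagonal_apply]
  module

/-- Applying the extremal qubit map `Φ^E_{u,v}` (Kraus operators `A k` with
`∑ A_k† A_k = I`, `∑ A_k A_k† = I + sin u sin v · σ₃`, `∑ A_k σ₁ A_k† = cos u · σ₁`,
`∑ A_k σ₂ A_k† = cos v · σ₂`, `∑ A_k σ₃ A_k† = cos u cos v · σ₃`) to Alice's half of the
T-state `ρ(0,0,diag(t₁,t₂,t₃))` produces the displaced T-state with Alice's Bloch vector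
`(0,0, sin u sin v)` and correlation matrix `diag(t₁ cos u, t₂ cos v, t₃ cos u cos v)`. -/
theorem extremal_map_on_T_state {F : Type} [Fintype F]
    (t₁ t₂ t₃ u v : ℝ) (A : F → Matrix (Fin 2) (Fin 2) ℂ)
    (hTP : ∑ k, (A k)ᴴ * A k = 1)
    (hI : ∑ k, A k * (A k)ᴴ = 1 + ((Real.sin u * Real.sin v : ℝ) : ℂ) • pauli 2)
    (h1 : ∑ k, A k * pauli 0 * (A k)ᴴ = ((Real.cos u : ℝ) : ℂ) • pauli 0)
    (h2 : ∑ k, A k * pauli 1 * (A k)ᴴ = ((Real.cos v : ℝ) : ℂ) • pauli 1)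
    (h3 : ∑ k, A k * pauli 2 * (A k)ᴴ = ((Real.cos u * Real.cos v : ℝ) : ℂ) • pauli 2) :
    ∑ k, kron (A k) 1 * blochState 0 0 (Matrix.diagonal ![t₁, t₂, t₃]) * kron ((A k)ᴴ) 1 =
      blochState ![0, 0, Real.sin u * Real.sin v] 0
        (Matrix.diagonal ![t₁ * Real.cos u, t₂ * Real.cos v,
          t₃ * (Real.cos u * Real.cos v)]) := by
  have key : ∀ k (P Q : Matrix (Fin 2) (Fin 2) ℂ),
      kron (A k) 1 * kron P Q * kron ((A k)ᴴ) 1 = kron (A k * P * (A k)ᴴ) Q := by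
    intro k P Q
    rw [kron_mul, kron_mul, one_mul, mul_one]
  calc ∑ k, kron (A k) 1 * blochState 0 0 (Matrix.diagonal ![t₁, t₂, t₃]) * kron ((A k)ᴴ) 1
      = ∑ k, (4:ℂ)⁻¹ • (kron (A k * (A k)ᴴ) 1
          + (t₁:ℂ) • kron (A k * pauli 0 * (A k)ᴴ) (pauli 0)
          + (t₂:ℂ) • kron (A k * pauli 1 * (A k)ᴴ) (pauli 1)
          + (t₃:ℂ) • kron (A k * pauli 2 * (A k)ᴴ) (pauli 2)) := by
        refine Finset.sum_congr rfl fun k _ => ?_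
        rw [blochState_T]
        simp only [mul_add, add_mul, smul_mul_assoc, mul_smul_comm, key]
        rw [show A k * 1 * (A k)ᴴ = A k * (A k)ᴴ by rw [mul_one]]
    _ = (4:ℂ)⁻¹ • (kron (∑ k, A k * (A k)ᴴ) 1
          + (t₁:ℂ) • kron (∑ k, A k * pauli 0 * (A k)ᴴ) (pauli 0)
          + (t₂:ℂ) • kron (∑ k, A k * pauli 1 * (A k)ᴴ) (pauli 1)
          + (t₃:ℂ) • kron (∑ k, A k * pauli 2 * (A k)ᴴ) (pauli 2)) := by
        rw [← Finset.smul_sum]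
        congr 1
        simp only [Finset.sum_add_distrib, kron_sum_left, Finset.smul_sum]
    _ = blochState ![0, 0, Real.sin u * Real.sin v] 0
        (Matrix.diagonal ![t₁ * Real.cos u, t₂ * Real.cos v,
          t₃ * (Real.cos u * Real.cos v)]) := by
        rw [hI, h1, h2, h3, blochState_disp, kron_add_left, kron_smul_left, kron_smul_left,
          kron_smul_left, kron_smul_left]
        push_cast
        module
end
end

section
/- Let a ∈ (0,1) and α ∈ (0,π), set c := 2·cot²α/(1−a) − 1, and suppose c > 0. Define r := (√(2(1−a)) / sin α) · [√(1+c) + (1/(2√c))·log((√(1+c) + √c)/(√(1+c) − √c))]^{-1} (note (1/2)·log((√(1+c)+√c)/(√(1+c)−√c)) = arcsinh √c). Then r satisfies the non-steerability boundary equation for displaced T-states with degenerate correlation eigenvalues t₁' = t₂' = r sin α/√2, t₃' = r cos α: (1/2π) ∫_{S²} √( r² sin²α (x₁² + x₂²) / (2(1−a)) + r² cos²α · x₃² / (1−a)² ) dσ(x) = 1. -/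
/-! With `A = r² sin²α / (2(1 - a))` the integrand is `√A · q(x)`, where
`q(x) = √(x₁² + x₂² + (1 + c) x₃²)`, and `√A = 1 / K` for `K = √(1 + c) + arsinh √c / √c`:
the logarithm in the definition of `r` is `2 arsinh √c`. So it suffices that `∫_{S²} q dσ = 2πK`.
Since `q` is homogeneous of degree one, polar decomposition of Lebesgue measure gives
`∫_{S²} q dσ = 4 ∫_{|x| < 1} q`, and the ball integral is computed in cylindrical coordinates:
the radial integral is elementary, and the height integral has a primitive built from
`z (1 + c z²)^{3/2}`, `z √(1 + c z²)` and `arsinh (√c z)`. -/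

open MeasureTheory

noncomputable section

/-- The unit sphere `S²` in `ℝ³`. -/
abbrev S2 : Set (EuclideanSpace ℝ (Fin 3)) := Metric.sphere (0 : EuclideanSpace ℝ (Fin 3)) 1

/-- The surface measure `σ` on the unit sphere `S² ⊂ ℝ³`; it is the 2-dimensional
(Hausdorff) surface measure, with total mass `4π`. -/
def sphereMeasure : Measure (Metric.sphere (0 : EuclideanSpace ℝ (Fin 3)) 1) :=
  (volume : Measure (EuclideanSpace ℝ (Fin 3))).toSphere

open Metric Set Real

local notation "ℝ³" => EuclideanSpace ℝ (Fin 3)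

theorem integral_volumeIoiPow (n : ℕ) (g : ℝ → ℝ) :
    ∫ t : Ioi (0 : ℝ), g t ∂(Measure.volumeIoiPow n) = ∫ t in Ioi 0, t ^ n * g t := by
  simp only [Measure.volumeIoiPow, ENNReal.ofReal]
  rw [integral_withDensity_eq_integral_smul (measurable_subtype_coe.pow_const _).real_toNNReal,
    integral_subtype_comap measurableSet_Ioi fun t ↦ (t ^ n).toNNReal • g t]
  refine setIntegral_congr_fun measurableSet_Ioi fun t ht ↦ ?_
  rw [NNReal.smul_def, Real.coe_toNNReal _ (pow_nonneg (le_of_lt ht) _), smul_eq_mul]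

theorem integral_ball_eq_integral_toSphere_div_of_homogeneous
    {E : Type*} [NormedAddCommGroup E] [NormedSpace ℝ E] [FiniteDimensional ℝ E] [Nontrivial E]
    [MeasurableSpace E] [BorelSpace E] (μ : Measure E) [μ.IsAddHaarMeasure]
    {f : E → ℝ} (k : ℕ) (hf : ∀ x, ∀ t : ℝ, 0 < t → f (t • x) = t ^ k * f x) :
    ∫ x in ball 0 1, f x ∂μ
      = (∫ ω : sphere (0 : E) 1, f ω ∂μ.toSphere) / (Module.finrank ℝ E + k) := by
  set n := Module.finrank ℝ E
  have hn : 0 < n := Module.finrank_pos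
  have hpolar : ∀ ω : sphere (0 : E) 1, ∀ t : Ioi (0 : ℝ),
      (ball 0 1).indicator f ((t : ℝ) • (ω : E)) = f ω * (Iio 1).indicator (· ^ k) (t : ℝ) := by
    rintro ω ⟨t, ht⟩
    replace ht : 0 < t := ht
    have hmem : t • (ω : E) ∈ ball 0 1 ↔ t ∈ Iio 1 := by
      rw [mem_ball_zero_iff, norm_smul, norm_eq_of_mem_sphere, mul_one, norm_of_nonneg ht.le,
        mem_Iio]
    by_cases h : t < 1 <;> simp [indicator, hmem, h, hf _ _ ht, mul_comm]
  have hradial :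
      ∫ t : Ioi (0 : ℝ), (Iio 1).indicator (· ^ k) (t : ℝ) ∂(Measure.volumeIoiPow (n - 1))
        = 1 / (n + k) := by
    have hpow : ∀ t ∈ Ioi (0 : ℝ), t ^ (n - 1) * (Iio 1).indicator (· ^ k) t
        = (Iio 1).indicator (· ^ (n - 1 + k)) t := by
      intro t _
      by_cases h : t < 1 <;> simp [indicator, h, pow_add]
    rw [integral_volumeIoiPow, setIntegral_congr_fun measurableSet_Ioi hpow,
      setIntegral_indicator measurableSet_Iio, Ioi_inter_Iio, ← integral_Ioc_eq_integral_Ioo,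
      ← intervalIntegral.integral_of_le zero_le_one, integral_pow]
    have hcast : ((n - 1 : ℕ) : ℝ) + k + 1 = n + k := by
      rw [Nat.cast_pred hn]; ring
    simp [hcast]
  calc ∫ x in ball 0 1, f x ∂μ = ∫ x, (ball 0 1).indicator f x ∂μ :=
        (integral_indicator measurableSet_ball).symm
    _ = ∫ x : ({0}ᶜ : Set E), (ball 0 1).indicator f x ∂(μ.comap (↑)) := by
        rw [integral_subtype_comap (measurableSet_singleton _).compl, restrict_compl_singleton]
    _ = ∫ p : sphere (0 : E) 1 × Ioi (0 : ℝ), (ball 0 1).indicator f ((p.2 : ℝ) • (p.1 : E))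
          ∂(μ.toSphere.prod (Measure.volumeIoiPow (n - 1))) := by
        rw [← μ.measurePreserving_homeomorphUnitSphereProd.integral_comp
          (Homeomorph.measurableEmbedding _)]
        congr! with x
        simp [smul_smul, mul_inv_cancel₀ (norm_ne_zero_iff.2 x.2)]
    _ = (∫ ω : sphere (0 : E) 1, f ω ∂μ.toSphere) *
          ∫ t : Ioi (0 : ℝ), (Iio 1).indicator (· ^ k) (t : ℝ) ∂(Measure.volumeIoiPow (n - 1)) := by
        simp_rw [hpolar]
        exact integral_prod_mul (fun ω : sphere (0 : E) 1 => f ω)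
          (fun t : Ioi (0 : ℝ) => (Iio 1).indicator (· ^ k) (t : ℝ))
    _ = _ := by rw [hradial, mul_one_div]

theorem integral_fun_sq_add_sq (h : ℝ → ℝ) :
    ∫ p : ℝ × ℝ, h (p.1 ^ 2 + p.2 ^ 2) = 2 * π * ∫ ρ in Ioi 0, ρ * h (ρ ^ 2) := by
  have hpolar : ∀ p ∈ polarCoord.target,
      p.1 • h ((polarCoord.symm p).1 ^ 2 + (polarCoord.symm p).2 ^ 2) = p.1 * h (p.1 ^ 2) * 1 := by
    rintro ⟨ρ, θ⟩ -
    simp only [polarCoord_symm_apply, smul_eq_mul, mul_one]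
    congr 2
    linear_combination ρ ^ 2 * sin_sq_add_cos_sq θ
  rw [← integral_comp_polarCoord_symm,
    setIntegral_congr_fun polarCoord.open_target.measurableSet hpolar, polarCoord_target,
    Measure.volume_eq_prod, setIntegral_prod_mul (fun ρ => ρ * h (ρ ^ 2)) (fun _ => (1 : ℝ)),
    setIntegral_const, Real.volume_real_Ioo_of_le (by linarith [pi_pos]), smul_eq_mul]
  ring

def heightPlaneEquiv : ℝ³ ≃ᵐ ℝ × ℝ × ℝ :=
  ((MeasurableEquiv.toLp 2 (Fin 3 → ℝ)).symm.trans
    (MeasurableEquiv.piFinSuccAbove (fun _ => ℝ) 2)).trans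
    (MeasurableEquiv.prodCongr (MeasurableEquiv.refl ℝ) MeasurableEquiv.finTwoArrow)

theorem heightPlaneEquiv_apply (x : ℝ³) : heightPlaneEquiv x = (x 2, x 0, x 1) :=
  rfl

theorem measurePreserving_heightPlaneEquiv : MeasurePreserving heightPlaneEquiv :=
  (((EuclideanSpace.volume_preserving_symm_measurableEquiv_toLp (Fin 3))).trans
    (volume_preserving_piFinSuccAbove (fun _ : Fin 3 => ℝ) 2)).trans
    ((MeasurePreserving.id volume).prod (volume_preserving_finTwoArrow ℝ))

theorem integral_euclideanSpace_fin_three_cylindrical (g : ℝ → ℝ → ℝ)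
    (hg : Integrable fun x : ℝ³ => g (x 0 ^ 2 + x 1 ^ 2) (x 2)) :
    ∫ x : ℝ³, g (x 0 ^ 2 + x 1 ^ 2) (x 2)
      = 2 * π * ∫ z, ∫ ρ in Ioi 0, ρ * g (ρ ^ 2) z := by
  set G : ℝ × ℝ × ℝ → ℝ := fun q => g (q.2.1 ^ 2 + q.2.2 ^ 2) q.1
  have hmp := measurePreserving_heightPlaneEquiv
  have hG : Integrable G (volume.prod volume) :=
    (hmp.integrable_comp_emb heightPlaneEquiv.measurableEmbedding).1 hg
  calc ∫ x : ℝ³, g (x 0 ^ 2 + x 1 ^ 2) (x 2)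
      = ∫ q, G q := by
        rw [← hmp.integral_comp heightPlaneEquiv.measurableEmbedding G]
        simp only [G, heightPlaneEquiv_apply]
    _ = ∫ z, 2 * π * ∫ ρ in Ioi 0, ρ * g (ρ ^ 2) z := by
        rw [Measure.volume_eq_prod, integral_prod _ hG]
        exact integral_congr_ae (.of_forall fun z => integral_fun_sq_add_sq (g · z))
    _ = _ := integral_const_mul _ _

theorem integral_mul_sqrt_sq_add {b R : ℝ} (hb : 0 ≤ b) (hR : 0 ≤ R) :
    ∫ ρ in (0 : ℝ)..R, ρ * √(ρ ^ 2 + b) = ((R ^ 2 + b) * √(R ^ 2 + b) - b * √b) / 3 := by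
  have hderiv : ∀ ρ ∈ Ioo 0 R,
      HasDerivAt (fun ρ => (ρ ^ 2 + b) * √(ρ ^ 2 + b) / 3) (ρ * √(ρ ^ 2 + b)) ρ := by
    intro ρ hρ
    have hpos : 0 < ρ ^ 2 + b := by have := hρ.1; positivity
    have hinner : HasDerivAt (fun ρ => ρ ^ 2 + b) (2 * ρ) ρ := by
      simpa using (hasDerivAt_pow 2 ρ).add_const b
    refine ((hinner.mul (hinner.sqrt hpos.ne')).div_const 3).congr_deriv ?_
    have hs : √(ρ ^ 2 + b) ≠ 0 := (sqrt_pos.2 hpos).ne'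
    field_simp
    rw [sq_sqrt hpos.le]
    ring
  rw [intervalIntegral.integral_eq_sub_of_hasDerivAt_of_le hR (by fun_prop) hderiv
    (by apply Continuous.intervalIntegrable; fun_prop)]
  simp
  ring

theorem hasDerivAt_primitive_one_add_mul_sq_mul_sqrt {c : ℝ} (hc : 0 < c) (z : ℝ) :
    HasDerivAt (fun z => z * (1 + c * z ^ 2) * √(1 + c * z ^ 2) / 4
        + 3 / 8 * z * √(1 + c * z ^ 2) + 3 / 8 * arsinh (√c * z) / √c)
      ((1 + c * z ^ 2) * √(1 + c * z ^ 2)) z := by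
  have hw : 0 < 1 + c * z ^ 2 := by positivity
  have hinner : HasDerivAt (fun z => 1 + c * z ^ 2) (c * (2 * z)) z := by
    simpa using ((hasDerivAt_pow 2 z).const_mul c).const_add 1
  have hsqrt := hinner.sqrt hw.ne'
  have harsinh := ((hasDerivAt_id z).const_mul √c).arsinh
  have hsum := (((((hasDerivAt_id z).mul hinner).mul hsqrt).div_const 4).add
    (((hasDerivAt_id z).const_mul (3 / 8)).mul hsqrt)).add
    ((harsinh.const_mul (3 / 8)).div_const √c)
  refine hsum.congr_deriv ?_
  have hs : √(1 + c * z ^ 2) ≠ 0 := (sqrt_pos.2 hw).ne'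
  have hq : √c ≠ 0 := (sqrt_pos.2 hc).ne'
  simp only [id, Pi.mul_apply, mul_pow, sq_sqrt hc.le, smul_eq_mul]
  field_simp
  linear_combination (-12 - 8 * c * z ^ 2) * sq_sqrt hw.le

theorem integral_one_add_mul_sq_mul_sqrt_sub {c : ℝ} (hc : 0 < c) :
    ∫ z in (0 : ℝ)..1, ((1 + c * z ^ 2) * √(1 + c * z ^ 2) - (1 + c) * √(1 + c) * z ^ 3)
      = 3 / 8 * (√(1 + c) + arsinh √c / √c) := by
  rw [intervalIntegral.integral_sub (by apply Continuous.intervalIntegrable; fun_prop)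
      (by apply Continuous.intervalIntegrable; fun_prop),
    intervalIntegral.integral_eq_sub_of_hasDerivAt
      (fun z _ => hasDerivAt_primitive_one_add_mul_sq_mul_sqrt hc z)
      (by apply Continuous.intervalIntegrable; fun_prop),
    intervalIntegral.integral_const_mul, integral_pow]
  simp
  ring

theorem integral_Ioi_mul_ite_sqrt {b z : ℝ} (hb : 0 ≤ b) (hz : z ^ 2 < 1) :
    ∫ ρ in Ioi 0, ρ * (if ρ ^ 2 + z ^ 2 < 1 then √(ρ ^ 2 + b) else 0)
      = ((1 - z ^ 2 + b) * √(1 - z ^ 2 + b) - b * √b) / 3 := by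
  have hR : 0 ≤ 1 - z ^ 2 := by linarith
  have hind : ∀ ρ ∈ Ioi (0 : ℝ), ρ * (if ρ ^ 2 + z ^ 2 < 1 then √(ρ ^ 2 + b) else 0)
      = (Iio √(1 - z ^ 2)).indicator (fun ρ => ρ * √(ρ ^ 2 + b)) ρ := by
    intro ρ hρ
    have hiff : ρ ^ 2 + z ^ 2 < 1 ↔ ρ ∈ Iio √(1 - z ^ 2) := by
      rw [mem_Iio, lt_sqrt (le_of_lt hρ)]
      constructor <;> intro <;> linarith
    by_cases h : ρ ^ 2 + z ^ 2 < 1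
    · rw [if_pos h, indicator_of_mem (hiff.1 h)]
    · rw [if_neg h, indicator_of_notMem (mt hiff.2 h), mul_zero]
  rw [setIntegral_congr_fun measurableSet_Ioi hind, setIntegral_indicator measurableSet_Iio,
    Ioi_inter_Iio, ← integral_Ioc_eq_integral_Ioo,
    ← intervalIntegral.integral_of_le (sqrt_nonneg _), integral_mul_sqrt_sq_add hb (sqrt_nonneg _),
    sq_sqrt hR]

theorem integral_ball_sqrt_sq_add_sq_add_mul_sq {c : ℝ} (hc : 0 < c) :
    ∫ x in ball (0 : ℝ³) 1, √(x 0 ^ 2 + x 1 ^ 2 + (1 + c) * x 2 ^ 2)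
      = π / 2 * (√(1 + c) + arsinh √c / √c) := by
  set Q : ℝ³ → ℝ := fun x => √(x 0 ^ 2 + x 1 ^ 2 + (1 + c) * x 2 ^ 2)
  set g : ℝ → ℝ → ℝ := fun s z => if s + z ^ 2 < 1 then √(s + (1 + c) * z ^ 2) else 0
  set h : ℝ → ℝ := (Iio 1).indicator
    fun z => ((1 + c * z ^ 2) * √(1 + c * z ^ 2) - (1 + c) * √(1 + c) * z ^ 3) / 3
  have hball : ∀ x, (ball 0 1).indicator Q x = g (x 0 ^ 2 + x 1 ^ 2) (x 2) := by
    intro x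
    have hmem : x ∈ ball 0 1 ↔ x 0 ^ 2 + x 1 ^ 2 + x 2 ^ 2 < 1 := by
      rw [mem_ball_zero_iff, ← sq_lt_one_iff₀ (norm_nonneg x), EuclideanSpace.real_norm_sq_eq,
        Fin.sum_univ_three]
    by_cases hx : x ∈ ball 0 1
    · simp only [Q, g, indicator_of_mem hx, if_pos (hmem.1 hx)]
    · simp only [Q, g, indicator_of_notMem hx, if_neg (mt hmem.2 hx)]
  have hint : Integrable ((ball (0 : ℝ³) 1).indicator Q) := by
    rw [integrable_indicator_iff measurableSet_ball]
    exact ((by fun_prop : Continuous Q).continuousOn.integrableOn_compact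
      (isCompact_closedBall 0 1)).mono_set ball_subset_closedBall
  have hslice : ∀ z, ∫ ρ in Ioi 0, ρ * g (ρ ^ 2) z = h |z| := by
    intro z
    simp only [h]
    by_cases hz : |z| ∈ Iio 1
    · have hz2 : z ^ 2 < 1 := sq_lt_one_iff_abs_lt_one z |>.2 hz.out
      rw [integral_Ioi_mul_ite_sqrt (by positivity) hz2, indicator_of_mem hz,
        show 1 - z ^ 2 + (1 + c) * z ^ 2 = 1 + c * z ^ 2 by ring,
        sqrt_mul (by positivity), sqrt_sq_eq_abs, sq_abs, pow_succ |z|, sq_abs]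
      ring
    · have hz2 : 1 ≤ z ^ 2 := one_le_sq_iff_one_le_abs z |>.2 (not_lt.1 (mt mem_Iio.2 hz))
      rw [indicator_of_notMem hz]
      refine integral_eq_zero_of_ae (.of_forall fun ρ => ?_)
      simp only [g, if_neg (by nlinarith [sq_nonneg ρ] : ¬ρ ^ 2 + z ^ 2 < 1), mul_zero,
        Pi.zero_apply]
  calc ∫ x in ball 0 1, Q x = ∫ x : ℝ³, g (x 0 ^ 2 + x 1 ^ 2) (x 2) := by
        rw [← integral_indicator measurableSet_ball]
        exact integral_congr_ae (.of_forall hball)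
    _ = 2 * π * ∫ z, h |z| := by
        rw [integral_euclideanSpace_fin_three_cylindrical g
          (hint.congr (.of_forall hball)), integral_congr_ae (.of_forall hslice)]
    _ = 2 * π * (2 * ∫ z in (0 : ℝ)..1,
          ((1 + c * z ^ 2) * √(1 + c * z ^ 2) - (1 + c) * √(1 + c) * z ^ 3) / 3) := by
        rw [integral_comp_abs, setIntegral_indicator measurableSet_Iio, Ioi_inter_Iio,
          ← integral_Ioc_eq_integral_Ioo, ← intervalIntegral.integral_of_le zero_le_one]
    _ = π / 2 * (√(1 + c) + arsinh √c / √c) := by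
        rw [intervalIntegral.integral_div, integral_one_add_mul_sq_mul_sqrt_sub hc]
        ring

theorem integral_sphere_sqrt_sq_add_sq_add_mul_sq {c : ℝ} (hc : 0 < c) :
    ∫ ω : sphere (0 : ℝ³) 1,
        √((ω : ℝ³) 0 ^ 2 + (ω : ℝ³) 1 ^ 2
          + (1 + c) * (ω : ℝ³) 2 ^ 2) ∂(volume.toSphere)
      = 2 * π * (√(1 + c) + arsinh √c / √c) := by
  have hhom : ∀ (x : ℝ³) (t : ℝ), 0 < t →
      √((t • x) 0 ^ 2 + (t • x) 1 ^ 2 + (1 + c) * (t • x) 2 ^ 2)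
        = t ^ 1 * √(x 0 ^ 2 + x 1 ^ 2 + (1 + c) * x 2 ^ 2) := by
    intro x t ht
    simp only [PiLp.smul_apply, smul_eq_mul]
    rw [pow_one, ← sqrt_sq ht.le, ← sqrt_mul (sq_nonneg t), sqrt_sq ht.le]
    ring_nf
  have h := integral_ball_eq_integral_toSphere_div_of_homogeneous volume 1
    (f := fun x : ℝ³ => √(x 0 ^ 2 + x 1 ^ 2 + (1 + c) * x 2 ^ 2)) hhom
  rw [integral_ball_sqrt_sq_add_sq_add_mul_sq hc, finrank_euclideanSpace_fin] at h
  rw [eq_div_iff (by norm_num)] at h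
  linear_combination -h

theorem log_sqrt_one_add_sq_add_div_sub (y : ℝ) :
    log ((√(1 + y ^ 2) + y) / (√(1 + y ^ 2) - y)) = 2 * arsinh y := by
  have hu : √(1 + y ^ 2) + y = exp (arsinh y) := by rw [exp_arsinh, add_comm]
  have hv : √(1 + y ^ 2) - y = exp (-arsinh y) := by
    rw [← arsinh_neg, exp_arsinh, neg_sq]; ring
  rw [hu, hv, ← exp_sub, log_exp]
  ring

theorem displaced_T_boundary_pos_general (a α c r : ℝ)
    (ha1 : a < 1) (hα0 : 0 < α) (hα1 : α < Real.pi)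
    (hc : c = 2 * Real.cot α ^ 2 / (1 - a) - 1) (hcpos : 0 < c)
    (hr : r = Real.sqrt (2 * (1 - a)) / Real.sin α *
      (Real.sqrt (1 + c) + 1 / (2 * Real.sqrt c) *
        Real.log ((Real.sqrt (1 + c) + Real.sqrt c) /
          (Real.sqrt (1 + c) - Real.sqrt c)))⁻¹) :
    (2 * Real.pi)⁻¹ *
      (∫ x : Metric.sphere (0 : EuclideanSpace ℝ (Fin 3)) 1,
        Real.sqrt (r ^ 2 * Real.sin α ^ 2 *
            ((x : EuclideanSpace ℝ (Fin 3)) 0 ^ 2 +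
              (x : EuclideanSpace ℝ (Fin 3)) 1 ^ 2) / (2 * (1 - a)) +
          r ^ 2 * Real.cos α ^ 2 *
            (x : EuclideanSpace ℝ (Fin 3)) 2 ^ 2 / (1 - a) ^ 2) ∂sphereMeasure) = 1 := by
  have h1a : 0 < 1 - a := by linarith
  have hsin : 0 < sin α := sin_pos_of_pos_of_lt_pi hα0 hα1
  have hsphere := integral_sphere_sqrt_sq_add_sq_add_mul_sq hcpos
  set K := √(1 + c) + arsinh √c / √c with hKdef
  have hK : 0 < K := by
    have : 0 ≤ arsinh √c := arsinh_nonneg_iff.2 (sqrt_nonneg c)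
    positivity
  have hlog : log ((√(1 + c) + √c) / (√(1 + c) - √c)) = 2 * arsinh √c := by
    have := log_sqrt_one_add_sq_add_div_sub √c
    rwa [sq_sqrt hcpos.le] at this
  have hrK : r * sin α / √(2 * (1 - a)) = K⁻¹ := by
    have hq : √c ≠ 0 := (sqrt_pos.2 hcpos).ne'
    rw [hr, hlog, show √(1 + c) + 1 / (2 * √c) * (2 * arsinh √c) = K by
      rw [hKdef]; field_simp]
    field_simp
  have hpoint : ∀ x : Metric.sphere (0 : EuclideanSpace ℝ (Fin 3)) 1,
      √(r ^ 2 * sin α ^ 2 * ((x : EuclideanSpace ℝ (Fin 3)) 0 ^ 2 +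
          (x : EuclideanSpace ℝ (Fin 3)) 1 ^ 2) / (2 * (1 - a)) +
        r ^ 2 * cos α ^ 2 * (x : EuclideanSpace ℝ (Fin 3)) 2 ^ 2 / (1 - a) ^ 2)
      = K⁻¹ * √((x : EuclideanSpace ℝ (Fin 3)) 0 ^ 2 + (x : EuclideanSpace ℝ (Fin 3)) 1 ^ 2
          + (1 + c) * (x : EuclideanSpace ℝ (Fin 3)) 2 ^ 2) := by
    intro x
    rw [← sqrt_sq (inv_nonneg.2 hK.le), ← sqrt_mul (sq_nonneg _), ← hrK, div_pow, mul_pow,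
      sq_sqrt (by positivity), hc, cot_eq_cos_div_sin]
    congr 1
    field_simp
    ring
  rw [integral_congr_ae (.of_forall hpoint), integral_const_mul, sphereMeasure, hsphere]
  field_simp

/-- Displaced T-state boundary, case `c > 0`: with `c = 2cot²α/(1−a) − 1` and
`r = (√(2(1−a))/sin α)·[√(1+c) + (1/(2√c))·log((√(1+c)+√c)/(√(1+c)−√c))]⁻¹`,
`r` satisfies the non-steerability boundary equation
`(1/2π) ∫_{S²} √(r² sin²α (x₁²+x₂²)/(2(1−a)) + r² cos²α x₃²/(1−a)²) dσ = 1`. -/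
theorem displaced_T_boundary_pos (a α c r : ℝ)
    (ha0 : 0 < a) (ha1 : a < 1) (hα0 : 0 < α) (hα1 : α < Real.pi)
    (hc : c = 2 * Real.cot α ^ 2 / (1 - a) - 1) (hcpos : 0 < c)
    (hr : r = Real.sqrt (2 * (1 - a)) / Real.sin α *
      (Real.sqrt (1 + c) + 1 / (2 * Real.sqrt c) *
        Real.log ((Real.sqrt (1 + c) + Real.sqrt c) /
          (Real.sqrt (1 + c) - Real.sqrt c)))⁻¹) :
    (2 * Real.pi)⁻¹ *
      (∫ x : Metric.sphere (0 : EuclideanSpace ℝ (Fin 3)) 1,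
        Real.sqrt (r ^ 2 * Real.sin α ^ 2 *
            ((x : EuclideanSpace ℝ (Fin 3)) 0 ^ 2 +
              (x : EuclideanSpace ℝ (Fin 3)) 1 ^ 2) / (2 * (1 - a)) +
          r ^ 2 * Real.cos α ^ 2 *
            (x : EuclideanSpace ℝ (Fin 3)) 2 ^ 2 / (1 - a) ^ 2) ∂sphereMeasure) = 1 :=
  displaced_T_boundary_pos_general a α c r ha1 hα0 hα1 hc hcpos hr
end
end

section
/- Let a ∈ (0,1) and α ∈ (0,π), set c := 2·cot²α/(1−a) − 1, and suppose −1 < c < 0. Define r := (√(2(1−a)) / sin α) · [√(1+c) + arcsin(√(−c))/√(−c)]^{-1}. Then r satisfies the non-steerability boundary equation for displaced T-states with degenerate correlation eigenvalues t₁' = t₂' = r sin α/√2, t₃' = r cos α: (1/2π) ∫_{S²} √( r² sin²α (x₁² + x₂²) / (2(1−a)) + r² cos²α · x₃² / (1−a)² ) dσ(x) = 1. -/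
/-
Extend the integrand to the 1-homogeneous function `N(x) = √(A(x₀² + x₁²) + B x₂²)` on `ℝ³`,
with `A = r² sin²α / (2(1-a))` and `B = r² cos²α / (1-a)² = A(1+c)`. Homogeneity turns the
sphere integral into `4 ∫_{|x|<1} N`. Slicing the ball at height `z` and integrating in polar
coordinates over the slice leaves `∫_{-1}^{1} (A - (A-B) z²)^{3/2}`, whose antiderivative brings
in `arcsin √(1 - B/A) = arcsin √(-c)`. Altogether
`∫_{S²} N dσ = 2π √A (√(1+c) + arcsin √(-c) / √(-c))`, and the choice of `r` makes `√A` the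
reciprocal of the bracket.
-/

open MeasureTheory

noncomputable section

open Metric Set Real

theorem integral_ball_eq_of_homogeneous {E : Type*} [NormedAddCommGroup E] [InnerProductSpace ℝ E]
    [FiniteDimensional ℝ E] [MeasurableSpace E] [BorelSpace E] [Nontrivial E]
    (μ : Measure E) [μ.IsAddHaarMeasure] {f : E → ℝ} {p : ℕ}
    (hf : ∀ t : ℝ, 0 ≤ t → ∀ x, f (t • x) = t ^ p * f x) :
    ∫ x in ball 0 1, f x ∂μ
      = (Module.finrank ℝ E + p : ℝ)⁻¹ * ∫ u : sphere (0 : E) 1, f u ∂μ.toSphere := by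
  set d := Module.finrank ℝ E
  set w : ℝ → ℝ := (Iio 1).indicator (· ^ p)
  have hradial : ∫ t : Ioi (0 : ℝ), w t ∂(Measure.volumeIoiPow (d - 1)) = (d + p : ℝ)⁻¹ := by
    have hd : 0 < d := Module.finrank_pos
    simp only [Measure.volumeIoiPow, ENNReal.ofReal]
    rw [integral_withDensity_eq_integral_smul (measurable_subtype_coe.pow_const _).real_toNNReal,
      integral_subtype_comap measurableSet_Ioi fun t => (t ^ (d - 1)).toNNReal • w t,
      setIntegral_congr_fun measurableSet_Ioi (g := (Iio 1).indicator (· ^ (d - 1 + p))),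
      setIntegral_indicator measurableSet_Iio, Ioi_inter_Iio, ← integral_Ioc_eq_integral_Ioo,
      ← intervalIntegral.integral_of_le zero_le_one, integral_pow]
    · rw [Nat.cast_add, Nat.cast_pred hd]; norm_num; ring
    · intro t ht
      beta_reduce
      rw [NNReal.smul_def, Real.coe_toNNReal _ (pow_nonneg (le_of_lt ht) _)]
      by_cases h : t < 1
      · simp [w, h, pow_add]
      · simp [w, h]
  have hpolar : ∀ x : ({0}ᶜ : Set E), (ball (0 : E) 1).indicator f x
      = f (homeomorphUnitSphereProd E x).1 * w (homeomorphUnitSphereProd E x).2 := by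
    rintro ⟨x, hx⟩
    have hnorm : ‖x‖ ≠ 0 := norm_ne_zero_iff.2 hx
    have hx_eq : x = ‖x‖ • (‖x‖⁻¹ • x) := by rw [smul_smul, mul_inv_cancel₀ hnorm, one_smul]
    simp only [homeomorphUnitSphereProd_apply_fst_coe, homeomorphUnitSphereProd_apply_snd_coe]
    by_cases h : ‖x‖ < 1
    · simp only [w]
      rw [indicator_of_mem (mem_ball_zero_iff.2 h), indicator_of_mem (show ‖x‖ ∈ Iio 1 from h)]
      conv_lhs => rw [hx_eq, hf _ (norm_nonneg x)]
      ring
    · simp only [w]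
      rw [indicator_of_notMem (by simpa using h), indicator_of_notMem (by simpa using h), mul_zero]
  calc ∫ x in ball 0 1, f x ∂μ
      = ∫ x : ({0}ᶜ : Set E), (ball (0 : E) 1).indicator f x ∂(μ.comap Subtype.val) := by
        rw [integral_subtype_comap (measurableSet_singleton _).compl, restrict_compl_singleton,
          integral_indicator measurableSet_ball]
    _ = ∫ q : sphere (0 : E) 1 × Ioi (0 : ℝ), f q.1 * w q.2
          ∂(μ.toSphere.prod (Measure.volumeIoiPow (d - 1))) := by
        simp_rw [hpolar]
        exact μ.measurePreserving_homeomorphUnitSphereProd.integral_comp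
          (Homeomorph.measurableEmbedding _) (fun q => f q.1 * w q.2)
    _ = _ := by
        rw [integral_prod_mul (fun u : sphere (0 : E) 1 => f u) (fun t : Ioi (0 : ℝ) => w t),
          hradial, mul_comm]

theorem integral_euclideanSpace_fin_three_eq_integral_integral {F : Type*} [NormedAddCommGroup F]
    [NormedSpace ℝ F] {f : EuclideanSpace ℝ (Fin 3) → F} (hf : Integrable f) :
    ∫ x, f x = ∫ z : ℝ, ∫ p : ℝ × ℝ, f !₂[p.1, p.2, z] := by
  let ψ : EuclideanSpace ℝ (Fin 3) ≃ᵐ ℝ × (ℝ × ℝ) :=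
    (MeasurableEquiv.toLp 2 (Fin 3 → ℝ)).symm.trans
      ((MeasurableEquiv.piFinSuccAbove (fun _ : Fin 3 => ℝ) 2).trans
        ((MeasurableEquiv.refl ℝ).prodCongr MeasurableEquiv.finTwoArrow))
  have hψ : MeasurePreserving ψ.symm volume volume :=
    (((MeasurePreserving.id volume).prod (volume_preserving_finTwoArrow ℝ)).comp
      ((volume_preserving_piFinSuccAbove (fun _ : Fin 3 => ℝ) 2).comp
        (EuclideanSpace.volume_preserving_symm_measurableEquiv_toLp (Fin 3)))).symm _
  have hψ_symm : ∀ q : ℝ × (ℝ × ℝ), ψ.symm q = !₂[q.2.1, q.2.2, q.1] := by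
    intro q
    ext i
    fin_cases i <;> rfl
  rw [← hψ.integral_comp ψ.symm.measurableEmbedding, Measure.volume_eq_prod, integral_prod]
  · simp only [hψ_symm]
  · exact (hψ.integrable_comp_emb ψ.symm.measurableEmbedding).2 hf

theorem integral_comp_sq_add_sq {F : Type*} [NormedAddCommGroup F] [NormedSpace ℝ F] (g : ℝ → F) :
    ∫ p : ℝ × ℝ, g (p.1 ^ 2 + p.2 ^ 2) = (2 * π) • ∫ ρ in Ioi 0, ρ • g (ρ ^ 2) := by
  rw [← integral_comp_polarCoord_symm, polarCoord_target, Measure.volume_eq_prod,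
    ← Measure.prod_restrict]
  have hρ : ∀ q : ℝ × ℝ, (polarCoord.symm q).1 ^ 2 + (polarCoord.symm q).2 ^ 2 = q.1 ^ 2 := by
    rintro ⟨ρ, θ⟩
    simp only [polarCoord_symm_apply]
    linear_combination ρ ^ 2 * Real.cos_sq_add_sin_sq θ
  simp only [hρ]
  rw [integral_fun_fst (fun ρ => ρ • g (ρ ^ 2)), measureReal_restrict_apply_univ,
    Real.volume_real_Ioo_of_le (by linarith [Real.pi_pos])]
  ring_nf

theorem integral_mul_sqrt_mul_sq_add {A C R : ℝ} (hA : 0 < A) (hC : 0 ≤ C) (hR : 0 ≤ R) :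
    ∫ ρ in (0 : ℝ)..R, ρ * √(A * ρ ^ 2 + C) = (√(A * R ^ 2 + C) ^ 3 - √C ^ 3) / (3 * A) := by
  have hderiv : ∀ ρ ∈ Ioo 0 R,
      HasDerivAt (fun ρ => √(A * ρ ^ 2 + C) ^ 3 / (3 * A)) (ρ * √(A * ρ ^ 2 + C)) ρ := by
    intro ρ hρ
    have hpos : 0 < A * ρ ^ 2 + C := by have := hρ.1; positivity
    have hinner : HasDerivAt (fun ρ : ℝ => A * ρ ^ 2 + C) (A * (2 * ρ)) ρ := by
      simpa using ((hasDerivAt_pow 2 ρ).const_mul A).add_const C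
    refine ((((Real.hasDerivAt_sqrt hpos.ne').comp ρ hinner).pow 3).div_const
      (3 * A)).congr_deriv ?_
    simp only [Function.comp_apply]
    field_simp
    ring
  rw [intervalIntegral.integral_eq_sub_of_hasDerivAt_of_le hR (by fun_prop) hderiv
    (Continuous.intervalIntegrable (by fun_prop) _ _)]
  simp only [ne_eq, OfNat.ofNat_ne_zero, not_false_eq_true, zero_pow, mul_zero, zero_add]
  ring

theorem integral_abs_pow_neg_one_one (n : ℕ) : ∫ x in (-1 : ℝ)..1, |x| ^ n = 2 / (n + 1) := by
  have hpos : ∫ x in (0 : ℝ)..1, |x| ^ n = 1 / (n + 1) := by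
    rw [intervalIntegral.integral_congr (g := (· ^ n)) fun x hx => by
      rw [uIcc_of_le zero_le_one] at hx; simp only [abs_of_nonneg hx.1]]
    simp
  have hneg : ∫ x in (-1 : ℝ)..0, |x| ^ n = 1 / (n + 1) := by
    rw [← hpos, ← neg_zero, ← intervalIntegral.integral_comp_neg]
    simp
  rw [← intervalIntegral.integral_add_adjacent_intervals (b := 0)
    (Continuous.intervalIntegrable (by fun_prop) _ _)
    (Continuous.intervalIntegrable (by fun_prop) _ _), hneg, hpos]
  ring

theorem integral_sqrt_add_mul_sq_pow_three {A B : ℝ} (hB : 0 ≤ B) (hBA : B < A) :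
    ∫ z in (-1 : ℝ)..1, √(A + (B - A) * z ^ 2) ^ 3
      = √B ^ 3 / 2 + 3 * A / 4 * (√B + A / √(A - B) * arcsin (√(A - B) / √A)) := by
  have hA : 0 < A := by linarith
  set k := √(A - B) / √A with hk
  have hsA : √A ^ 2 = A := Real.sq_sqrt hA.le
  have hsD : √(A - B) ^ 2 = A - B := Real.sq_sqrt (by linarith)
  have hsD0 : 0 < √(A - B) := Real.sqrt_pos.2 (by linarith)
  set G : ℝ → ℝ := fun z => z * √(A + (B - A) * z ^ 2) ^ 3 / 4
    + 3 * A / 8 * (z * √(A + (B - A) * z ^ 2) + A / √(A - B) * arcsin (k * z))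
  have hderiv : ∀ z ∈ Ioo (-1 : ℝ) 1, HasDerivAt G (√(A + (B - A) * z ^ 2) ^ 3) z := by
    intro z hz
    have hz2 : z ^ 2 < 1 := by nlinarith [hz.1, hz.2]
    set u := A + (B - A) * z ^ 2 with hu
    have hu0 : 0 < u := by nlinarith
    have hsu : √u ^ 2 = u := Real.sq_sqrt hu0.le
    have hkz : 1 - (k * z) ^ 2 = u / A := by
      rw [mul_pow, hk, div_pow, hsA, hsD]; field_simp; ring
    have hkz_abs : |k * z| < 1 := by
      rw [← sq_lt_one_iff_abs_lt_one]
      linarith [div_pos hu0 hA]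
    have hu' : HasDerivAt (fun z : ℝ => A + (B - A) * z ^ 2) ((B - A) * (2 * z)) z := by
      simpa using ((hasDerivAt_pow 2 z).const_mul (B - A)).const_add A
    have hsqrt := (Real.hasDerivAt_sqrt hu0.ne').comp z hu'
    have harcsin := (Real.hasDerivAt_arcsin (abs_lt.1 hkz_abs).1.ne'
      (abs_lt.1 hkz_abs).2.ne).comp z ((hasDerivAt_id' z).const_mul k)
    refine ((((hasDerivAt_id z).mul (hsqrt.pow 3)).div_const 4).add
      ((((hasDerivAt_id z).mul hsqrt).add (harcsin.const_mul (A / √(A - B)))).const_mul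
        (3 * A / 8))).congr_deriv ?_
    simp only [Pi.pow_apply, Function.comp_apply, id_eq, Nat.cast_ofNat, one_mul, hkz,
      Real.sqrt_div hu0.le, ← hu]
    rw [hk]
    field_simp
    have hsu4 : √u ^ 4 = u ^ 2 := by rw [show 4 = 2 * 2 from rfl, pow_mul, hsu]
    rw [show (3 : ℕ) - 1 = 2 from rfl, hsu, hsu4]
    linear_combination -(24 * u + 12 * A) * hu
  rw [intervalIntegral.integral_eq_sub_of_hasDerivAt_of_le (by norm_num)
    (by fun_prop) hderiv (Continuous.intervalIntegrable (by fun_prop) _ _)]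
  simp only [G, one_pow, mul_one, neg_one_sq, mul_neg, arcsin_neg,
    show A + (B - A) = B by ring]
  ring

def spheroidalNorm (A B : ℝ) (x : EuclideanSpace ℝ (Fin 3)) : ℝ :=
  √(A * (x 0 ^ 2 + x 1 ^ 2) + B * x 2 ^ 2)

theorem mem_ball_zero_one_iff_sq_add_sq_add_sq (a b c : ℝ) :
    !₂[a, b, c] ∈ ball (0 : EuclideanSpace ℝ (Fin 3)) 1 ↔ a ^ 2 + b ^ 2 + c ^ 2 < 1 := by
  rw [mem_ball_zero_iff, ← sq_lt_one_iff₀ (norm_nonneg _), EuclideanSpace.norm_sq_eq]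
  simp [Fin.sum_univ_three]

theorem integral_indicator_ball_spheroidalNorm_slice {A B z : ℝ} (hA : 0 < A) (hB : 0 ≤ B)
    (hz : z ^ 2 < 1) :
    ∫ p : ℝ × ℝ, (ball 0 1).indicator (spheroidalNorm A B) !₂[p.1, p.2, z]
      = 2 * π / (3 * A) * (√(A + (B - A) * z ^ 2) ^ 3 - √B ^ 3 * |z| ^ 3) := by
  set R := √(1 - z ^ 2)
  have hR : 0 < R := Real.sqrt_pos.2 (by linarith)
  have hR_sq : R ^ 2 = 1 - z ^ 2 := Real.sq_sqrt (by linarith)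
  have hpolar : ∀ p : ℝ × ℝ, (ball 0 1).indicator (spheroidalNorm A B) !₂[p.1, p.2, z]
      = (Iio (1 - z ^ 2)).indicator (fun s => √(A * s + B * z ^ 2)) (p.1 ^ 2 + p.2 ^ 2) := by
    intro p
    by_cases h : p.1 ^ 2 + p.2 ^ 2 + z ^ 2 < 1
    · rw [indicator_of_mem ((mem_ball_zero_one_iff_sq_add_sq_add_sq _ _ _).2 h),
        indicator_of_mem (show _ ∈ Iio _ by simp only [mem_Iio]; linarith)]
      simp [spheroidalNorm]
    · rw [indicator_of_notMem (mt (mem_ball_zero_one_iff_sq_add_sq_add_sq _ _ _).1 h),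
        indicator_of_notMem (show _ ∉ Iio _ by simp only [mem_Iio]; linarith)]
  have hradial : ∀ ρ ∈ Ioi (0 : ℝ),
      ρ • (Iio (1 - z ^ 2)).indicator (fun s => √(A * s + B * z ^ 2)) (ρ ^ 2)
        = (Iio R).indicator (fun ρ => ρ * √(A * ρ ^ 2 + B * z ^ 2)) ρ := by
    intro ρ hρ
    have hiff : ρ ^ 2 < 1 - z ^ 2 ↔ ρ < R := by
      rw [← hR_sq]; exact pow_lt_pow_iff_left₀ (le_of_lt hρ) hR.le two_ne_zero
    by_cases h : ρ < R
    · rw [indicator_of_mem (show ρ ^ 2 ∈ Iio _ from hiff.2 h),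
        indicator_of_mem (show ρ ∈ Iio R from h), smul_eq_mul]
    · rw [indicator_of_notMem (show ρ ^ 2 ∉ Iio _ from mt hiff.1 h),
        indicator_of_notMem (show ρ ∉ Iio R from h), smul_zero]
  simp_rw [hpolar]
  rw [integral_comp_sq_add_sq, setIntegral_congr_fun measurableSet_Ioi hradial,
    setIntegral_indicator measurableSet_Iio, Ioi_inter_Iio, ← integral_Ioc_eq_integral_Ioo,
    ← intervalIntegral.integral_of_le hR.le, integral_mul_sqrt_mul_sq_add hA (by positivity) hR.le,
    hR_sq, Real.sqrt_mul hB, Real.sqrt_sq_eq_abs, smul_eq_mul]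
  ring_nf

theorem spheroidalNorm_smul (A B : ℝ) {t : ℝ} (ht : 0 ≤ t) (x : EuclideanSpace ℝ (Fin 3)) :
    spheroidalNorm A B (t • x) = t * spheroidalNorm A B x := by
  simp only [spheroidalNorm, PiLp.smul_apply, smul_eq_mul]
  rw [show A * ((t * x 0) ^ 2 + (t * x 1) ^ 2) + B * (t * x 2) ^ 2
      = t ^ 2 * (A * (x 0 ^ 2 + x 1 ^ 2) + B * x 2 ^ 2) by ring,
    Real.sqrt_mul (sq_nonneg t), Real.sqrt_sq ht]

theorem integral_sphere_spheroidalNorm {A B : ℝ} (hB : 0 ≤ B) (hBA : B < A) :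
    ∫ u : sphere (0 : EuclideanSpace ℝ (Fin 3)) 1, spheroidalNorm A B u ∂volume.toSphere
      = 2 * π * (√B + A / √(A - B) * arcsin (√(A - B) / √A)) := by
  have hA : 0 < A := by linarith
  set f : ℝ → ℝ := fun z => 2 * π / (3 * A) * (√(A + (B - A) * z ^ 2) ^ 3 - √B ^ 3 * |z| ^ 3)
  have hslices : ∫ x in ball 0 1, spheroidalNorm A B x = ∫ z in (-1 : ℝ)..1, f z := by
    have hint :
        Integrable ((ball (0 : EuclideanSpace ℝ (Fin 3)) 1).indicator (spheroidalNorm A B)) :=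
      (integrable_indicator_iff measurableSet_ball).2 <|
        ((Continuous.continuousOn (by unfold spheroidalNorm; fun_prop)).integrableOn_compact
          (isCompact_closedBall 0 1)).mono_set ball_subset_closedBall
    rw [← integral_indicator measurableSet_ball,
      integral_euclideanSpace_fin_three_eq_integral_integral hint,
      ← setIntegral_eq_integral_of_forall_compl_eq_zero (s := Ioo (-1) 1),
      intervalIntegral.integral_of_le (by norm_num), integral_Ioc_eq_integral_Ioo]
    · refine setIntegral_congr_fun measurableSet_Ioo fun z hz => ?_
      exact integral_indicator_ball_spheroidalNorm_slice hA hB (by nlinarith [hz.1, hz.2])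
    · intro z hz
      have hz2 : 1 ≤ z ^ 2 := by
        simp only [mem_Ioo, not_and_or, not_lt] at hz
        rcases hz with h | h <;> nlinarith
      refine integral_eq_zero_of_ae (Filter.Eventually.of_forall fun p => ?_)
      refine indicator_of_notMem (fun h => ?_) _
      have := (mem_ball_zero_one_iff_sq_add_sq_add_sq _ _ _).1 h
      nlinarith [sq_nonneg p.1, sq_nonneg p.2]
  have hball := integral_ball_eq_of_homogeneous (volume : Measure (EuclideanSpace ℝ (Fin 3)))
    (f := spheroidalNorm A B) (p := 1) fun t ht x => by rw [pow_one, spheroidalNorm_smul A B ht]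
  rw [finrank_euclideanSpace_fin, hslices] at hball
  have hf : ∫ z in (-1 : ℝ)..1, f z = π / 2 * (√B + A / √(A - B) * arcsin (√(A - B) / √A)) := by
    simp only [f]
    rw [intervalIntegral.integral_const_mul, intervalIntegral.integral_sub
      (Continuous.intervalIntegrable (by fun_prop) _ _)
      (Continuous.intervalIntegrable (by fun_prop) _ _), intervalIntegral.integral_const_mul,
      integral_sqrt_add_mul_sq_pow_three hB hBA, integral_abs_pow_neg_one_one]
    field_simp
    ring
  rw [hf] at hball
  linarith

theorem sqrt_mul_one_add_add_div_sqrt_mul_arcsin {A c : ℝ} (hA : 0 < A) (hc : c < 0) :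
    √(A * (1 + c)) + A / √(A - A * (1 + c)) * arcsin (√(A - A * (1 + c)) / √A)
      = √A * (√(1 + c) + arcsin (√(-c)) / √(-c)) := by
  have hsA : 0 < √A := Real.sqrt_pos.2 hA
  rw [show A - A * (1 + c) = A * -c by ring, Real.sqrt_mul hA.le, Real.sqrt_mul hA.le,
    mul_div_cancel_left₀ _ hsA.ne']
  have hsc : 0 < √(-c) := Real.sqrt_pos.2 (neg_pos.2 hc)
  field_simp
  rw [Real.sq_sqrt hA.le]
  ring

theorem displaced_T_boundary_neg_general (a α c r : ℝ)
    (ha1 : a < 1) (hα0 : 0 < α) (hα1 : α < Real.pi)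
    (hc : c = 2 * Real.cot α ^ 2 / (1 - a) - 1) (hc0 : -1 < c) (hc1 : c < 0)
    (hr : r = Real.sqrt (2 * (1 - a)) / Real.sin α *
      (Real.sqrt (1 + c) + Real.arcsin (Real.sqrt (-c)) / Real.sqrt (-c))⁻¹) :
    (2 * Real.pi)⁻¹ *
      (∫ x : Metric.sphere (0 : EuclideanSpace ℝ (Fin 3)) 1,
        Real.sqrt (r ^ 2 * Real.sin α ^ 2 *
            ((x : EuclideanSpace ℝ (Fin 3)) 0 ^ 2 +
              (x : EuclideanSpace ℝ (Fin 3)) 1 ^ 2) / (2 * (1 - a)) +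
          r ^ 2 * Real.cos α ^ 2 *
            (x : EuclideanSpace ℝ (Fin 3)) 2 ^ 2 / (1 - a) ^ 2) ∂sphereMeasure) = 1 := by
  have h1a : 0 < 1 - a := by linarith
  have hsin : sin α ≠ 0 := (sin_pos_of_pos_of_lt_pi hα0 hα1).ne'
  obtain ⟨K, hK_def⟩ : ∃ K, K = √(1 + c) + arcsin (√(-c)) / √(-c) := ⟨_, rfl⟩
  have hsc : 0 < √(-c) := Real.sqrt_pos.2 (by linarith)
  have hK : 0 < K :=
    hK_def ▸ add_pos_of_nonneg_of_pos (Real.sqrt_nonneg _) (div_pos (arcsin_pos.2 hsc) hsc)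
  obtain ⟨A, hA_def⟩ : ∃ A, A = r ^ 2 * sin α ^ 2 / (2 * (1 - a)) := ⟨_, rfl⟩
  have hA : A = K⁻¹ ^ 2 := by
    rw [hA_def, hr, ← hK_def, mul_pow, div_pow, Real.sq_sqrt (by linarith)]
    field_simp
  have hB : r ^ 2 * cos α ^ 2 / (1 - a) ^ 2 = A * (1 + c) := by
    rw [hA_def, hc, cot_eq_cos_div_sin]
    field_simp
    ring
  have hintegrand : ∀ x : sphere (0 : EuclideanSpace ℝ (Fin 3)) 1,
      √(r ^ 2 * sin α ^ 2 * ((x : EuclideanSpace ℝ (Fin 3)) 0 ^ 2 +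
          (x : EuclideanSpace ℝ (Fin 3)) 1 ^ 2) / (2 * (1 - a)) +
        r ^ 2 * cos α ^ 2 * (x : EuclideanSpace ℝ (Fin 3)) 2 ^ 2 / (1 - a) ^ 2)
        = spheroidalNorm A (A * (1 + c)) x := fun x => by
    rw [spheroidalNorm, ← hB, hA_def]
    ring_nf
  have hApos : 0 < A := hA ▸ by positivity
  simp_rw [hintegrand]
  rw [sphereMeasure, integral_sphere_spheroidalNorm (mul_nonneg hApos.le (by linarith))
      (mul_lt_of_lt_one_right hApos (by linarith)),
    sqrt_mul_one_add_add_div_sqrt_mul_arcsin hApos hc1, ← hK_def, hA,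
    Real.sqrt_sq (by positivity)]
  field_simp

/-- Displaced T-state boundary, case `−1 < c < 0`: with `c = 2cot²α/(1−a) − 1` and
`r = (√(2(1−a))/sin α)·[√(1+c) + arcsin(√(−c))/√(−c)]⁻¹`,
`r` satisfies the non-steerability boundary equation
`(1/2π) ∫_{S²} √(r² sin²α (x₁²+x₂²)/(2(1−a)) + r² cos²α x₃²/(1−a)²) dσ = 1`. -/
theorem displaced_T_boundary_neg (a α c r : ℝ)
    (ha0 : 0 < a) (ha1 : a < 1) (hα0 : 0 < α) (hα1 : α < Real.pi)
    (hc : c = 2 * Real.cot α ^ 2 / (1 - a) - 1) (hc0 : -1 < c) (hc1 : c < 0)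
    (hr : r = Real.sqrt (2 * (1 - a)) / Real.sin α *
      (Real.sqrt (1 + c) + Real.arcsin (Real.sqrt (-c)) / Real.sqrt (-c))⁻¹) :
    (2 * Real.pi)⁻¹ *
      (∫ x : Metric.sphere (0 : EuclideanSpace ℝ (Fin 3)) 1,
        Real.sqrt (r ^ 2 * Real.sin α ^ 2 *
            ((x : EuclideanSpace ℝ (Fin 3)) 0 ^ 2 +
              (x : EuclideanSpace ℝ (Fin 3)) 1 ^ 2) / (2 * (1 - a)) +
          r ^ 2 * Real.cos α ^ 2 *
            (x : EuclideanSpace ℝ (Fin 3)) 2 ^ 2 / (1 - a) ^ 2) ∂sphereMeasure) = 1 :=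
  displaced_T_boundary_neg_general a α c r ha1 hα0 hα1 hc hc0 hc1 hr
end
end
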